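/- arXiv:1612.07435 — 4 statements merged into one kernel-verified Lean document; each statement's English description precedes it below -/
import Mathlib

section
/- For every y > 0, the complementary error function satisfies the two-sided bound (2/√π)·e^{-y²}/(y + √(y²+2)) < erfc(y) ≤ (2/√π)·e^{-y²}/(y + √(y² + 4/π)). -/
open Real MeasureTheory Filter Set

noncomputable def erf (y : ℝ) : ℝ := (2 / Real.sqrt π) * ∫ t in (0:ℝ)..y, Real.exp (-t ^ 2)

noncomputable def erfc (y : ℝ) : ℝ := (2 / Real.sqrt π) * ∫ t in Set.Ioi y, Real.exp (-t ^ 2)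

noncomputable def erfinv : ℝ → ℝ := Function.invFun erf

/-!
Write `B_c = erfcBound c`. A direct computation gives
`(B_c - erfc)'(y) = w(y) ((c - 1) √(y² + c) - y)` with `w > 0`, and `B_c - erfc → 0` at `+∞`.
For `c = 2` the derivative is positive everywhere, so `B_2 - erfc` increases to its limit `0`
and is negative. For `c = 4/π ∈ [1, 2]` the derivative is nonnegative while
`y² (2 - c) ≤ (c - 1)²` and nonpositive afterwards, so on `[0, ∞)` the function `B_c - erfc`
rises from `B_c(0) - erfc 0 = 0` (this is what singles out `4/π`) and then decreases to `0`;
hence it is nonnegative.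
-/

open Topology

lemma nonneg_of_hasDerivAt_of_sign_change {f f' q : ℝ → ℝ} {a y : ℝ}
    (hf : ∀ x, HasDerivAt f (f' x) x) (hq : MonotoneOn q (Ici a))
    (hf'_nonneg : ∀ x, a ≤ x → q x ≤ 0 → 0 ≤ f' x)
    (hf'_nonpos : ∀ x, a ≤ x → 0 ≤ q x → f' x ≤ 0)
    (ha : 0 ≤ f a) (hlim : Tendsto f atTop (𝓝 0)) (hy : a ≤ y) : 0 ≤ f y := by
  have hcont : Continuous f := continuous_iff_continuousAt.2 fun x => (hf x).continuousAt
  rcases le_total (q y) 0 with hqy | hqy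
  · have : MonotoneOn f (Icc a y) := by
      refine monotoneOn_of_hasDerivWithinAt_nonneg (convex_Icc a y) hcont.continuousOn
        (fun x _ => (hf x).hasDerivWithinAt) fun x hx => ?_
      rw [interior_Icc] at hx
      exact hf'_nonneg x hx.1.le <| (hq hx.1.le hy hx.2.le).trans hqy
    exact ha.trans <| this (left_mem_Icc.2 hy) (right_mem_Icc.2 hy) hy
  · have : AntitoneOn f (Ici y) := by
      refine antitoneOn_of_hasDerivWithinAt_nonpos (convex_Ici y) hcont.continuousOn
        (fun x _ => (hf x).hasDerivWithinAt) fun x hx => ?_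
      rw [interior_Ici] at hx
      exact hf'_nonpos x (hy.trans hx.le) <| hqy.trans (hq hy (hy.trans hx.le) hx.le)
    exact le_of_tendsto hlim <| eventually_atTop.2
      ⟨y, fun z hz => this self_mem_Ici (mem_Ici.2 hz) hz⟩

lemma integrable_exp_neg_sq : Integrable fun t : ℝ => exp (-t ^ 2) := by
  simpa using integrable_exp_neg_mul_sq one_pos

lemma erfc_zero : erfc 0 = 1 := by
  have hI : ∫ t in Ioi (0 : ℝ), exp (-t ^ 2) = √π / 2 := by
    simpa using integral_gaussian_Ioi 1
  rw [erfc, hI]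
  field_simp

lemma erfc_eq_one_sub_erf (y : ℝ) : erfc y = 1 - erf y := by
  rw [← erfc_zero, erfc, erfc, erf, ← intervalIntegral.integral_Ioi_sub_Ioi'
    integrable_exp_neg_sq.integrableOn integrable_exp_neg_sq.integrableOn]
  ring

lemma hasDerivAt_erf (y : ℝ) : HasDerivAt erf (2 / √π * exp (-y ^ 2)) y :=
  (intervalIntegral.integral_hasDerivAt_right integrable_exp_neg_sq.intervalIntegrable
    ((by fun_prop : Continuous fun t : ℝ => exp (-t ^ 2)).stronglyMeasurableAtFilter _ _)
    (by fun_prop)).const_mul _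

lemma tendsto_erf_atTop : Tendsto erf atTop (𝓝 1) :=
  erfc_zero ▸ (intervalIntegral_tendsto_integral_Ioi 0 integrable_exp_neg_sq.integrableOn
    tendsto_id).const_mul (2 / √π)

lemma hasDerivAt_erfc (y : ℝ) : HasDerivAt erfc (-(2 / √π * exp (-y ^ 2))) y := by
  simpa [funext erfc_eq_one_sub_erf] using (hasDerivAt_erf y).const_sub 1

lemma tendsto_erfc_atTop : Tendsto erfc atTop (𝓝 0) := by
  simpa [funext erfc_eq_one_sub_erf] using tendsto_erf_atTop.const_sub 1

noncomputable def erfcBound (c y : ℝ) : ℝ := 2 / √π * exp (-y ^ 2) / (y + √(y ^ 2 + c))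

lemma tendsto_erfcBound_atTop (c : ℝ) : Tendsto (erfcBound c) atTop (𝓝 0) := by
  have hexp : Tendsto (fun y : ℝ => 2 / √π * exp (-y ^ 2)) atTop (𝓝 0) := by
    simpa using (tendsto_exp_atBot.comp <| tendsto_neg_atTop_atBot.comp <|
      tendsto_pow_atTop two_ne_zero).const_mul (2 / √π)
  have hden : Tendsto (fun y : ℝ => y + √(y ^ 2 + c)) atTop atTop :=
    tendsto_atTop_mono (fun _ => le_add_of_nonneg_right (sqrt_nonneg _)) tendsto_id
  have := hexp.mul hden.inv_tendsto_atTop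
  rw [zero_mul] at this
  exact this.congr fun y => (div_eq_mul_inv _ _).symm

section

variable {c : ℝ}

lemma add_sqrt_sq_add_pos (hc : 0 < c) (y : ℝ) : 0 < y + √(y ^ 2 + c) := by
  have h : |y| < √(y ^ 2 + c) := lt_sqrt_of_sq_lt (by rw [sq_abs]; linarith)
  linarith [neg_abs_le y]

lemma erfcBound_pos (hc : 0 < c) (y : ℝ) : 0 < erfcBound c y :=
  div_pos (by positivity) (add_sqrt_sq_add_pos hc y)

lemma erfcBound_div_pos (hc : 0 < c) (y : ℝ) :
    0 < erfcBound c y / (√(y ^ 2 + c) * (y + √(y ^ 2 + c))) :=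
  div_pos (erfcBound_pos hc y) (mul_pos (sqrt_pos.2 (by positivity)) (add_sqrt_sq_add_pos hc y))

lemma hasDerivAt_erfcBound_sub_erfc (hc : 0 < c) (y : ℝ) :
    HasDerivAt (fun x => erfcBound c x - erfc x)
      (erfcBound c y / (√(y ^ 2 + c) * (y + √(y ^ 2 + c))) * ((c - 1) * √(y ^ 2 + c) - y)) y := by
  have hs2 : √(y ^ 2 + c) ^ 2 = y ^ 2 + c := sq_sqrt (by positivity)
  have hv := add_sqrt_sq_add_pos hc y
  have hexp : HasDerivAt (fun x : ℝ => exp (-x ^ 2)) (exp (-y ^ 2) * (-(2 * y))) y := by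
    simpa using ((hasDerivAt_pow 2 y).neg).exp
  have hsqrt : HasDerivAt (fun x : ℝ => √(x ^ 2 + c)) (2 * y / (2 * √(y ^ 2 + c))) y := by
    simpa using ((hasDerivAt_pow 2 y).add_const c).sqrt (by positivity)
  refine (((hexp.const_mul (2 / √π)).div ((hasDerivAt_id y).add hsqrt) hv.ne').sub
    (hasDerivAt_erfc y)).congr_deriv ?_
  simp only [erfcBound, Pi.add_apply, id_eq]
  field_simp
  linear_combination √(y ^ 2 + c) * hs2

lemma sq_sub_one_mul_sqrt_sq_add (hc : 0 ≤ c) (x : ℝ) :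
    ((c - 1) * √(x ^ 2 + c)) ^ 2 = x ^ 2 + c * ((c - 1) ^ 2 - x ^ 2 * (2 - c)) := by
  rw [mul_pow, sq_sqrt (by positivity)]
  ring

lemma le_sub_one_mul_sqrt_sq_add (hc : 1 ≤ c) {x : ℝ} (hx : x ^ 2 * (2 - c) ≤ (c - 1) ^ 2) :
    x ≤ (c - 1) * √(x ^ 2 + c) :=
  (abs_le_of_sq_le_sq (by nlinarith [sq_sub_one_mul_sqrt_sq_add (c := c) (by linarith) x])
    (by have := sqrt_nonneg (x ^ 2 + c); nlinarith)).trans' (le_abs_self x)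

lemma sub_one_mul_sqrt_sq_add_le (hc : 0 ≤ c) {x : ℝ} (hx₀ : 0 ≤ x)
    (hx : (c - 1) ^ 2 ≤ x ^ 2 * (2 - c)) : (c - 1) * √(x ^ 2 + c) ≤ x :=
  (abs_le_of_sq_le_sq (by nlinarith [sq_sub_one_mul_sqrt_sq_add hc x]) hx₀).trans'
    (le_abs_self _)

end

theorem erfcBound_two_lt_erfc (y : ℝ) : erfcBound 2 y < erfc y := by
  have hmono : StrictMono fun x => erfcBound 2 x - erfc x := by
    refine strictMono_of_hasDerivAt_pos (hasDerivAt_erfcBound_sub_erfc two_pos) fun x => ?_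
    have hx : x < √(x ^ 2 + 2) := lt_sqrt_of_sq_lt (by linarith)
    exact mul_pos (erfcBound_div_pos two_pos x) (by linarith)
  have hlim : Tendsto (fun x => erfcBound 2 x - erfc x) atTop (𝓝 0) := by
    simpa using (tendsto_erfcBound_atTop 2).sub tendsto_erfc_atTop
  have := (hmono (lt_add_one y)).trans_le (hmono.monotone.ge_of_tendsto hlim (y + 1))
  linarith

lemma erfcBound_four_div_pi_zero : erfcBound (4 / π) 0 = 1 := by
  rw [erfcBound, zero_pow two_ne_zero, neg_zero, exp_zero, zero_add, zero_add,
    sqrt_div' _ pi_pos.le, show (4 : ℝ) = 2 ^ 2 by norm_num, sqrt_sq two_pos.le]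
  field_simp

theorem erfc_le_erfcBound_four_div_pi {y : ℝ} (hy : 0 ≤ y) : erfc y ≤ erfcBound (4 / π) y := by
  have hc₁ : 1 ≤ 4 / π := by rw [le_div_iff₀ pi_pos]; linarith [pi_lt_four]
  have hc₂ : 4 / π ≤ 2 := by rw [div_le_iff₀ pi_pos]; linarith [pi_gt_three]
  have hc : 0 < 4 / π := by positivity
  suffices 0 ≤ erfcBound (4 / π) y - erfc y by linarith
  refine nonneg_of_hasDerivAt_of_sign_change (f := fun x => erfcBound (4 / π) x - erfc x)
    (q := fun x => x ^ 2 * (2 - 4 / π) - (4 / π - 1) ^ 2) (hasDerivAt_erfcBound_sub_erfc hc)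
    (fun a ha b _ hab => ?_) (fun x _ hqx => ?_) (fun x hx hqx => ?_)
    (by rw [erfcBound_four_div_pi_zero, erfc_zero, sub_self])
    (by simpa using (tendsto_erfcBound_atTop _).sub tendsto_erfc_atTop) hy
  · have := pow_le_pow_left₀ ha hab 2
    dsimp only
    nlinarith
  · exact mul_nonneg (erfcBound_div_pos hc x).le
      (sub_nonneg.2 (le_sub_one_mul_sqrt_sq_add hc₁ (by linarith)))
  · exact mul_nonpos_of_nonneg_of_nonpos (erfcBound_div_pos hc x).le
      (sub_nonpos.2 (sub_one_mul_sqrt_sq_add_le hc.le hx (by linarith)))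

theorem erfc_two_sided_bound (y : ℝ) (hy : 0 < y) :
    (2 / Real.sqrt π) * Real.exp (-y ^ 2) / (y + Real.sqrt (y ^ 2 + 2)) < erfc y ∧
    erfc y ≤ (2 / Real.sqrt π) * Real.exp (-y ^ 2) / (y + Real.sqrt (y ^ 2 + 4 / π)) :=
  ⟨erfcBound_two_lt_erfc y, erfc_le_erfcBound_four_div_pi hy.le⟩
end

section
/- For every q > 0, one has 2e^{-q²}/(√π · q · erfc(q)) < 1 + √(1 + 2/q²). -/
open Real MeasureTheory Filter Set

/-!
For `g = erfcMinorant`, `g t = exp (-t²) / (t + √(t² + 2))`, one computes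
`g' = -(2t + 1/√(t² + 2)) g`, and `-g' < exp (-t²)` reduces to `t √(t² + 2) < t² + 1`, which is
AM-GM for `t` and `√(t² + 2)`. Integrating over `(q, ∞)`, where `g` decreases to `0`, gives
`g q < ∫_q^∞ exp (-t²)`, i.e. `erfc q > (2/√π) g q`; the claimed bound is this inequality
rearranged.
-/

theorem MeasureTheory.setIntegral_pos_of_forall_pos {X : Type*} [MeasurableSpace X]
    {μ : Measure X} {s : Set X} {f : X → ℝ} (hs : MeasurableSet s) (hμs : μ s ≠ 0)
    (hfi : IntegrableOn f s μ) (hf : ∀ x ∈ s, 0 < f x) : 0 < ∫ x in s, f x ∂μ := by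
  rw [setIntegral_pos_iff_support_of_nonneg_ae
    (ae_restrict_of_forall_mem hs fun x hx => (hf x hx).le) hfi,
    inter_eq_right.2 fun x hx => Function.mem_support.2 (hf x hx).ne', pos_iff_ne_zero]
  exact hμs

lemma abs_lt_sqrt_sq_add_two (t : ℝ) : |t| < √(t ^ 2 + 2) :=
  (Real.lt_sqrt (abs_nonneg t)).2 (by rw [sq_abs]; linarith)

lemma add_sqrt_sq_add_two_pos (t : ℝ) : 0 < t + √(t ^ 2 + 2) := by
  linarith [neg_abs_le t, abs_lt_sqrt_sq_add_two t]

lemma one_add_sqrt_one_add_two_div_sq {q : ℝ} (hq : 0 < q) :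
    1 + √(1 + 2 / q ^ 2) = (q + √(q ^ 2 + 2)) / q := by
  rw [show 1 + 2 / q ^ 2 = (q ^ 2 + 2) / q ^ 2 by field_simp, Real.sqrt_div' _ (sq_nonneg q),
    Real.sqrt_sq hq.le]
  field_simp

noncomputable def erfcMinorant (t : ℝ) : ℝ := exp (-t ^ 2) / (t + √(t ^ 2 + 2))

lemma erfcMinorant_pos (t : ℝ) : 0 < erfcMinorant t :=
  div_pos (exp_pos _) (add_sqrt_sq_add_two_pos t)

lemma hasDerivAt_erfcMinorant (t : ℝ) :
    HasDerivAt erfcMinorant (-(2 * t + 1 / √(t ^ 2 + 2)) * erfcMinorant t) t := by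
  have hexp : HasDerivAt (fun u : ℝ => exp (-u ^ 2)) (exp (-t ^ 2) * -(2 * t)) t := by
    simpa using ((hasDerivAt_pow 2 t).neg).exp
  have hsqrt : HasDerivAt (fun u : ℝ => √(u ^ 2 + 2)) (2 * t / (2 * √(t ^ 2 + 2))) t := by
    simpa using ((hasDerivAt_pow 2 t).add_const 2).sqrt (by positivity)
  have hd := (add_sqrt_sq_add_two_pos t).ne'
  refine (hexp.div ((hasDerivAt_id' t).add hsqrt) hd).congr_deriv ?_
  simp only [erfcMinorant, Pi.add_apply]
  field_simp
  ring

lemma mul_erfcMinorant_lt_exp (t : ℝ) :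
    (2 * t + 1 / √(t ^ 2 + 2)) * erfcMinorant t < exp (-t ^ 2) := by
  set s := √(t ^ 2 + 2)
  have hs : 0 < s := (abs_nonneg t).trans_lt (abs_lt_sqrt_sq_add_two t)
  have hs2 : s ^ 2 = t ^ 2 + 2 := Real.sq_sqrt (by positivity)
  have hts : t < s := (le_abs_self t).trans_lt (abs_lt_sqrt_sq_add_two t)
  have hamgm : t * s < t ^ 2 + 1 := by nlinarith [sq_pos_of_pos (sub_pos.2 hts)]
  have hcoef : 2 * t + 1 / s < t + s := by
    have : 1 / s < s - t := by rw [div_lt_iff₀ hs]; nlinarith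
    linarith
  calc (2 * t + 1 / s) * erfcMinorant t < (t + s) * erfcMinorant t :=
        mul_lt_mul_of_pos_right hcoef (erfcMinorant_pos t)
    _ = exp (-t ^ 2) := mul_div_cancel₀ _ (add_sqrt_sq_add_two_pos t).ne'

lemma tendsto_erfcMinorant_atTop : Tendsto erfcMinorant atTop (nhds 0) := by
  have hexp : Tendsto (fun t : ℝ => exp (-t ^ 2)) atTop (nhds 0) :=
    tendsto_exp_atBot.comp (tendsto_neg_atTop_atBot.comp (tendsto_pow_atTop two_ne_zero))
  have hden : Tendsto (fun t : ℝ => t + √(t ^ 2 + 2)) atTop atTop :=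
    tendsto_atTop_add_right_of_le _ 0 tendsto_id fun t => Real.sqrt_nonneg _
  have h := hexp.mul hden.inv_tendsto_atTop
  simp only [mul_zero, Pi.inv_apply, ← div_eq_mul_inv] at h
  exact h

lemma erfcMinorant_lt_integral {q : ℝ} (hq : 0 ≤ q) :
    erfcMinorant q < ∫ t in Ioi q, exp (-t ^ 2) := by
  have hderiv : ∀ t ∈ Ici q, HasDerivAt erfcMinorant
      (-(2 * t + 1 / √(t ^ 2 + 2)) * erfcMinorant t) t := fun t _ => hasDerivAt_erfcMinorant t
  have hnonpos : ∀ t ∈ Ioi q, -(2 * t + 1 / √(t ^ 2 + 2)) * erfcMinorant t ≤ 0 :=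
    fun t ht => mul_nonpos_of_nonpos_of_nonneg
      (neg_nonpos.2 (by have : 0 < t := hq.trans_lt ht; positivity)) (erfcMinorant_pos t).le
  have hint := integrableOn_Ioi_deriv_of_nonpos' hderiv hnonpos tendsto_erfcMinorant_atTop
  have hftc := integral_Ioi_of_hasDerivAt_of_tendsto' hderiv hint tendsto_erfcMinorant_atTop
  have hexp : IntegrableOn (fun t : ℝ => exp (-t ^ 2)) (Ioi q) := by
    simpa using (integrable_exp_neg_mul_sq one_pos).integrableOn
  have hpos : 0 < ∫ t in Ioi q, (exp (-t ^ 2) + -(2 * t + 1 / √(t ^ 2 + 2)) * erfcMinorant t) :=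
    setIntegral_pos_of_forall_pos measurableSet_Ioi (by simp) (hexp.add hint)
      fun t _ => by linarith [mul_erfcMinorant_lt_exp t]
  rw [integral_add hexp hint, hftc] at hpos
  linarith

lemma two_div_sqrt_pi_mul_erfcMinorant_lt_erfc {q : ℝ} (hq : 0 ≤ q) :
    2 / √π * erfcMinorant q < erfc q :=
  mul_lt_mul_of_pos_left (erfcMinorant_lt_integral hq) (by positivity)

theorem erfc_ratio_bound (q : ℝ) (hq : 0 < q) :
    2 * Real.exp (-q ^ 2) / (Real.sqrt π * q * erfc q) < 1 + Real.sqrt (1 + 2 / q ^ 2) := by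
  have hg := erfcMinorant_pos q
  have hden : √π * q * (2 / √π * erfcMinorant q) < √π * q * erfc q :=
    mul_lt_mul_of_pos_left (two_div_sqrt_pi_mul_erfcMinorant_lt_erfc hq.le) (by positivity)
  calc 2 * exp (-q ^ 2) / (√π * q * erfc q)
      < 2 * exp (-q ^ 2) / (√π * q * (2 / √π * erfcMinorant q)) :=
        div_lt_div_of_pos_left (by positivity) (by positivity) hden
    _ = (q + √(q ^ 2 + 2)) / q := by
        rw [erfcMinorant]
        have := (add_sqrt_sq_add_two_pos q).ne'
        field_simp
    _ = 1 + √(1 + 2 / q ^ 2) := (one_add_sqrt_one_add_two_div_sq hq).symm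
end

section
/- For every y > 0, one has π·erfc(y)²·e^{2y²} − 2 + 2y·√π·erfc(y)·e^{y²} > 0. -/
open Real MeasureTheory Filter Set

open Topology

/-!
Put `u = √(y² + 2)` and `J = e^{y²} ∫_y^∞ e^{-t²} dt`, so that `√π erfc y e^{y²} = 2J`. Since
`u² - y² = 2`, the expression factors as `(2J - (u - y)) (2J + (u + y))`, and `u - y = 2 / (y + u)`,
so everything rests on the lower bound `∫_y^∞ e^{-t²} dt > e^{-y²} / (y + u)`. That bound comes from
integrating `e^{-t²} + g'(t) > 0` over `(y, ∞)` for `g(t) = e^{-t²} / (t + √(t² + 2))`; after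
computing `g'`, the positivity reduces to `t √(t² + 2) < t² + 1`, i.e. `t² (t² + 2) < (t² + 1)²`.
-/

theorem lt_setIntegral_Ioi_of_hasDerivAt_of_nonpos {f g g' : ℝ → ℝ} {a : ℝ}
    (hderiv : ∀ x ∈ Ici a, HasDerivAt g (g' x) x) (hg'_nonpos : ∀ x ∈ Ioi a, g' x ≤ 0)
    (hg : Tendsto g atTop (𝓝 0)) (hf : IntegrableOn f (Ioi a))
    (hpos : ∀ x ∈ Ioi a, 0 < f x + g' x) :
    g a < ∫ x in Ioi a, f x := by
  have hg'_int : IntegrableOn g' (Ioi a) := integrableOn_Ioi_deriv_of_nonpos' hderiv hg'_nonpos hg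
  have hFTC : ∫ x in Ioi a, g' x = 0 - g a :=
    integral_Ioi_of_hasDerivAt_of_nonpos' hderiv hg'_nonpos hg
  have hsum_pos : 0 < ∫ x in Ioi a, (f x + g' x) := by
    rw [setIntegral_pos_iff_support_of_nonneg_ae
      ((ae_restrict_iff' measurableSet_Ioi).2 (ae_of_all _ fun x hx ↦ (hpos x hx).le))
      (hf.add hg'_int)]
    calc (0 : ENNReal) < volume (Ioi a) := by simp
      _ ≤ volume (Function.support (fun x ↦ f x + g' x) ∩ Ioi a) :=
        measure_mono fun x hx ↦ ⟨(hpos x hx).ne', hx⟩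
  rw [integral_add hf hg'_int, hFTC] at hsum_pos
  linarith

theorem sqrt_sq_add_two_sub_mul_add (t : ℝ) : (√(t ^ 2 + 2) - t) * (√(t ^ 2 + 2) + t) = 2 := by
  linear_combination sq_sqrt (show 0 ≤ t ^ 2 + 2 by positivity)

theorem lt_sqrt_sq_add_two (t : ℝ) : t < √(t ^ 2 + 2) :=
  lt_sqrt_of_sq_lt (by linarith)

theorem neg_lt_sqrt_sq_add_two (t : ℝ) : -t < √(t ^ 2 + 2) :=
  lt_sqrt_of_sq_lt (by linarith)

theorem mul_sqrt_sq_add_two_lt (t : ℝ) : t * √(t ^ 2 + 2) < t ^ 2 + 1 := by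
  have := sq_sqrt (show 0 ≤ t ^ 2 + 2 by positivity)
  nlinarith [sq_nonneg (t * √(t ^ 2 + 2) - t ^ 2 - 1)]

theorem hasDerivAt_exp_neg_sq_div_add_sqrt (t : ℝ) :
    HasDerivAt (fun s ↦ exp (-s ^ 2) / (s + √(s ^ 2 + 2)))
      (-exp (-t ^ 2) * (2 * t * √(t ^ 2 + 2) + 1) / (√(t ^ 2 + 2) * (t + √(t ^ 2 + 2)))) t := by
  have hu : 0 < √(t ^ 2 + 2) := sqrt_pos.2 (by positivity)
  have hden : 0 < t + √(t ^ 2 + 2) := by linarith [neg_lt_sqrt_sq_add_two t]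
  have hexp : HasDerivAt (fun s ↦ exp (-s ^ 2)) (exp (-t ^ 2) * (-(2 * t))) t := by
    simpa using ((hasDerivAt_pow 2 t).neg).exp
  have hsqrt : HasDerivAt (fun s ↦ √(s ^ 2 + 2)) (2 * t / (2 * √(t ^ 2 + 2))) t := by
    simpa using ((hasDerivAt_pow 2 t).add_const 2).sqrt (by positivity)
  refine (hexp.div ((hasDerivAt_id' t).fun_add hsqrt) hden.ne').congr_deriv ?_
  field_simp
  ring

theorem exp_neg_sq_div_add_sqrt_lt_integral_Ioi {y : ℝ} (hy : 0 ≤ y) :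
    exp (-y ^ 2) / (y + √(y ^ 2 + 2)) < ∫ t in Ioi y, exp (-t ^ 2) := by
  refine lt_setIntegral_Ioi_of_hasDerivAt_of_nonpos
    (fun t _ ↦ hasDerivAt_exp_neg_sq_div_add_sqrt t) (fun t ht ↦ ?_) ?_
    (by simpa using (integrable_exp_neg_mul_sq one_pos).integrableOn) (fun t _ ↦ ?_)
  · have ht : 0 < t := hy.trans_lt ht
    exact div_nonpos_of_nonpos_of_nonneg
      (mul_nonpos_of_nonpos_of_nonneg (neg_nonpos.2 (exp_pos _).le) (by positivity))
      (by positivity)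
  · exact (tendsto_exp_neg_atTop_nhds_zero.comp (tendsto_pow_atTop two_ne_zero)).div_atTop
      (tendsto_atTop_mono (fun t ↦ le_add_of_nonneg_right (sqrt_nonneg _)) tendsto_id)
  · have hratio : (2 * t * √(t ^ 2 + 2) + 1) / (√(t ^ 2 + 2) * (t + √(t ^ 2 + 2))) < 1 := by
      have hu_sq := sq_sqrt (show 0 ≤ t ^ 2 + 2 by positivity)
      have hu : 0 < √(t ^ 2 + 2) := sqrt_pos.2 (by positivity)
      have hden : 0 < t + √(t ^ 2 + 2) := by linarith [neg_lt_sqrt_sq_add_two t]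
      rw [div_lt_one (by positivity)]
      nlinarith [mul_sqrt_sq_add_two_lt t]
    rw [mul_div_assoc]
    nlinarith [exp_pos (-t ^ 2)]

theorem erfc_quadratic_combination_pos (y : ℝ) (hy : 0 < y) :
    0 < π * erfc y ^ 2 * Real.exp (2 * y ^ 2) - 2 +
      2 * y * Real.sqrt π * erfc y * Real.exp (y ^ 2) := by
  set u := √(y ^ 2 + 2)
  set J := exp (y ^ 2) * ∫ t in Ioi y, exp (-t ^ 2) with hJ_def
  have hJ : u - y < 2 * J := by
    have hden : 0 < y + u := by linarith [neg_lt_sqrt_sq_add_two y]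
    calc u - y = 2 * exp (y ^ 2) * (exp (-y ^ 2) / (y + u)) := by
          rw [mul_div_assoc', mul_assoc, ← exp_add, add_neg_cancel, exp_zero, eq_div_iff hden.ne']
          linear_combination sqrt_sq_add_two_sub_mul_add y
      _ < 2 * exp (y ^ 2) * ∫ t in Ioi y, exp (-t ^ 2) := by
          gcongr
          exact exp_neg_sq_div_add_sqrt_lt_integral_Ioi hy.le
      _ = 2 * J := mul_assoc _ _ _
  have hform : π * erfc y ^ 2 * Real.exp (2 * y ^ 2) - 2 +
      2 * y * Real.sqrt π * erfc y * Real.exp (y ^ 2) = (2 * J - (u - y)) * (2 * J + (u + y)) := by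
    have hπ : √π ^ 2 = π := sq_sqrt pi_pos.le
    have hexp : exp (2 * y ^ 2) = exp (y ^ 2) ^ 2 := by rw [← exp_nat_mul]; norm_num
    rw [erfc, hexp]
    field_simp
    rw [hπ, hJ_def]
    linear_combination π * sqrt_sq_add_two_sub_mul_add y
  rw [hform]
  exact mul_pos (by linarith) (by linarith [lt_sqrt_sq_add_two y])
end

section
/- Let γ > 0, ν ≥ 0, and c be real with 0 ≤ c/(2γ) < 1. Then (1/√(2π))·∫_{-∞}^{∞} e^{-h²/2}·e^{c·max(|h|−ν, 0)²/(4γ)} dh = exp((c·ν²/(4γ))/(1 − c/(2γ)))/√(1 − c/(2γ)) · erfc( ν / (√2·√(1 − c/(2γ))) ) + erf( ν/√2 ). -/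
open Real MeasureTheory Filter Set

/-! The integrand is even, so the integral is twice the one over `(0, ∞)`, which splits at `ν`.
On `(0, ν]` the tilt vanishes and the Gaussian integral is an `erf`. On `(ν, ∞)`, with
`a = c / (2γ) < 1`, completing the square
`-u²/2 + a (u - ν)²/2 = a ν²/(2(1 - a)) - (1 - a)(u + a ν/(1 - a))²/2`
leaves a shifted Gaussian of variance `1/(1 - a)`, whose tail is an `erfc`. -/

theorem integral_Ioi_comp_add_right {E : Type*} [NormedAddCommGroup E] [NormedSpace ℝ E]
    (g : ℝ → E) (a d : ℝ) : ∫ x in Ioi a, g (x + d) = ∫ x in Ioi (a + d), g x := by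
  rw [← integral_indicator measurableSet_Ioi, ← integral_indicator measurableSet_Ioi,
    ← integral_add_right_eq_self (Set.indicator (Ioi (a + d)) g) d]
  congr 1 with x
  simp [Set.indicator_apply]

theorem exp_neg_mul_sq_eq_exp_neg_sq_sqrt_mul {b : ℝ} (hb : 0 ≤ b) (x : ℝ) :
    exp (-b * x ^ 2) = exp (-(√b * x) ^ 2) := by
  rw [mul_pow, sq_sqrt hb, neg_mul]

theorem integral_exp_neg_mul_sq_eq_erf {b : ℝ} (hb : 0 < b) (y : ℝ) :
    ∫ x in (0 : ℝ)..y, exp (-b * x ^ 2) = √π / (2 * √b) * erf (√b * y) := by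
  have hsb : 0 < √b := sqrt_pos.2 hb
  simp_rw [exp_neg_mul_sq_eq_exp_neg_sq_sqrt_mul hb.le]
  rw [intervalIntegral.integral_comp_mul_left (fun t => exp (-t ^ 2)) hsb.ne', mul_zero, erf,
    smul_eq_mul]
  field_simp

theorem integral_Ioi_exp_neg_mul_sq_add_eq_erfc {b : ℝ} (hb : 0 < b) (a d : ℝ) :
    ∫ x in Ioi a, exp (-b * (x + d) ^ 2) = √π / (2 * √b) * erfc (√b * (a + d)) := by
  have hsb : 0 < √b := sqrt_pos.2 hb
  rw [integral_Ioi_comp_add_right (fun x => exp (-b * x ^ 2))]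
  simp_rw [exp_neg_mul_sq_eq_exp_neg_sq_sqrt_mul hb.le]
  rw [integral_comp_mul_left_Ioi (fun t => exp (-t ^ 2)) _ hsb, erfc, smul_eq_mul]
  field_simp

noncomputable def tiltedGaussian (a ν u : ℝ) : ℝ :=
  exp (-u ^ 2 / 2) * exp (a * max (u - ν) 0 ^ 2 / 2)

section TiltedGaussian

variable {a ν u : ℝ}

@[fun_prop]
theorem continuous_tiltedGaussian : Continuous (tiltedGaussian a ν) := by
  unfold tiltedGaussian
  fun_prop

theorem tiltedGaussian_of_le (h : u ≤ ν) : tiltedGaussian a ν u = exp (-2⁻¹ * u ^ 2) := by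
  rw [tiltedGaussian, max_eq_right (by linarith)]
  norm_num [neg_div, div_eq_inv_mul]

theorem tiltedGaussian_of_ge (ha : a ≠ 1) (h : ν ≤ u) :
    tiltedGaussian a ν u =
      exp (a * ν ^ 2 / 2 / (1 - a)) * exp (-((1 - a) / 2) * (u + a * ν / (1 - a)) ^ 2) := by
  have h1a : 1 - a ≠ 0 := sub_ne_zero.2 ha.symm
  rw [tiltedGaussian, max_eq_left (by linarith), ← exp_add, ← exp_add]
  congr 1
  field_simp
  ring

theorem integrableOn_Ioi_tiltedGaussian (ha : a < 1) :
    IntegrableOn (tiltedGaussian a ν) (Ioi ν) := by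
  have hgauss := ((integrable_exp_neg_mul_sq (b := (1 - a) / 2) (by linarith)).comp_add_right
    (a * ν / (1 - a))).const_mul (exp (a * ν ^ 2 / 2 / (1 - a)))
  refine hgauss.integrableOn.congr_fun (fun u hu => ?_) measurableSet_Ioi
  rw [tiltedGaussian_of_ge ha.ne hu.le]

theorem intervalIntegral_tiltedGaussian (hν : 0 ≤ ν) :
    ∫ u in (0 : ℝ)..ν, tiltedGaussian a ν u = √(2 * π) / 2 * erf (ν / √2) := by
  rw [intervalIntegral.integral_congr (g := fun u => exp (-2⁻¹ * u ^ 2))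
    (fun u hu => tiltedGaussian_of_le (by rw [uIcc_of_le hν] at hu; exact hu.2)),
    integral_exp_neg_mul_sq_eq_erf (by norm_num), sqrt_inv, sqrt_mul zero_le_two]
  field_simp

theorem integral_Ioi_tiltedGaussian (ha : a < 1) :
    ∫ u in Ioi ν, tiltedGaussian a ν u =
      √(2 * π) / 2 * (exp (a * ν ^ 2 / 2 / (1 - a)) / √(1 - a) *
        erfc (ν / (√2 * √(1 - a)))) := by
  have h1a : 0 < 1 - a := by linarith
  rw [setIntegral_congr_fun measurableSet_Ioi fun u hu => tiltedGaussian_of_ge ha.ne hu.le,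
    integral_const_mul, integral_Ioi_exp_neg_mul_sq_add_eq_erfc (by linarith),
    sqrt_div h1a.le, sqrt_mul zero_le_two]
  have hshift : ν + a * ν / (1 - a) = ν / (√(1 - a) * √(1 - a)) := by
    rw [mul_self_sqrt h1a.le]
    field_simp
    ring
  rw [hshift]
  field_simp

theorem integral_tiltedGaussian_abs (hν : 0 ≤ ν) (ha : a < 1) :
    1 / √(2 * π) * ∫ h, tiltedGaussian a ν |h| =
      exp (a * ν ^ 2 / 2 / (1 - a)) / √(1 - a) * erfc (ν / (√2 * √(1 - a))) +
        erf (ν / √2) := by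
  rw [integral_comp_abs, ← intervalIntegral.integral_interval_add_Ioi'
    (continuous_tiltedGaussian.intervalIntegrable _ _) (integrableOn_Ioi_tiltedGaussian ha),
    intervalIntegral_tiltedGaussian hν, integral_Ioi_tiltedGaussian ha]
  have : 0 < √(2 * π) := by positivity
  field_simp
  ring

end TiltedGaussian

theorem gaussian_integral_w1_general (γ ν c : ℝ) (hν : 0 ≤ ν)
    (hc1 : c / (2 * γ) < 1) :
    (1 / Real.sqrt (2 * π)) *
        ∫ h : ℝ, Real.exp (-h ^ 2 / 2) * Real.exp (c * max (|h| - ν) 0 ^ 2 / (4 * γ)) =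
      Real.exp ((c * ν ^ 2 / (4 * γ)) / (1 - c / (2 * γ))) / Real.sqrt (1 - c / (2 * γ)) *
          erfc (ν / (Real.sqrt 2 * Real.sqrt (1 - c / (2 * γ)))) +
        erf (ν / Real.sqrt 2) := by
  have hcoeff (x : ℝ) : c * x / (4 * γ) = c / (2 * γ) * x / 2 := by ring
  have hintegrand : (fun h : ℝ => exp (-h ^ 2 / 2) * exp (c * max (|h| - ν) 0 ^ 2 / (4 * γ))) =
      fun h => tiltedGaussian (c / (2 * γ)) ν |h| := by
    funext h
    rw [tiltedGaussian, sq_abs, hcoeff]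
  rw [hintegrand, hcoeff]
  exact integral_tiltedGaussian_abs hν hc1

theorem gaussian_integral_w1 (γ ν c : ℝ) (hγ : 0 < γ) (hν : 0 ≤ ν)
    (hc0 : 0 ≤ c / (2 * γ)) (hc1 : c / (2 * γ) < 1) :
    (1 / Real.sqrt (2 * π)) *
        ∫ h : ℝ, Real.exp (-h ^ 2 / 2) * Real.exp (c * max (|h| - ν) 0 ^ 2 / (4 * γ)) =
      Real.exp ((c * ν ^ 2 / (4 * γ)) / (1 - c / (2 * γ))) / Real.sqrt (1 - c / (2 * γ)) *
          erfc (ν / (Real.sqrt 2 * Real.sqrt (1 - c / (2 * γ)))) +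
        erf (ν / Real.sqrt 2) :=
  gaussian_integral_w1_general γ ν c hν hc1
end
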